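/- With Q symmetric positive definite, R₁ of full row rank r₁, R₂ of full column rank r₂, G = Q⁻¹R₁ᵀ(R₁Q⁻¹R₁ᵀ)⁻¹ and P = (R₂ᵀR₂)⁻¹R₂ᵀ, let B̃ = B̂₁ − G(R₁B̂₁R₂ − θ)(R₂ᵀR₂)⁻¹R₂ᵀ; then B̃ satisfies the constraint R₁B̃R₂ = θ, and for every B with R₁BR₂ = θ, tr((B̂₁−B̃)ᵀQ(B̂₁−B̃)) ≤ tr((B̂₁−B)ᵀQ(B̂₁−B)). -/

import Mathlib

open Matrix

lemma aux_inj_of_rank {m n : ℕ} (A : Matrix (Fin m) (Fin n) ℝ) (h : A.rank = n) :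
    Function.Injective A.mulVec := by
  have hrn := LinearMap.finrank_range_add_finrank_ker A.mulVecLin
  rw [Matrix.rank] at h
  rw [h] at hrn
  simp only [Module.finrank_pi, Fintype.card_fin] at hrn
  have hker : Module.finrank ℝ (LinearMap.ker A.mulVecLin) = 0 := by omega
  have : LinearMap.ker A.mulVecLin = ⊥ := Submodule.finrank_eq_zero.mp hker
  have hinj : Function.Injective A.mulVecLin := LinearMap.ker_eq_bot.mp this
  exact hinj

lemma aux_posdef_conj {m n : ℕ} {M : Matrix (Fin n) (Fin n) ℝ} (hM : M.PosDef)
    (B : Matrix (Fin n) (Fin m) ℝ) (hB : Function.Injective B.mulVec) :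
    (Bᵀ * M * B).PosDef := by
  refine Matrix.PosDef.of_dotProduct_mulVec_pos ?_ ?_
  · have h1 : (Bᵀ * M * B)ᴴ = Bᴴ * Mᴴ * Bᵀᴴ := by
      rw [conjTranspose_mul, conjTranspose_mul, Matrix.mul_assoc]
    rw [Matrix.IsHermitian, h1, hM.isHermitian.eq,
      conjTranspose_eq_transpose_of_trivial, conjTranspose_eq_transpose_of_trivial,
      transpose_transpose]
  · intro x hx
    have hBx : B.mulVec x ≠ 0 := fun h0 => hx (hB (by simpa using h0))
    have h2 := hM.dotProduct_mulVec_pos hBx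
    simp only [star_trivial] at h2 ⊢
    have hy : ((Bᵀ * M * B) *ᵥ x) = Bᵀ *ᵥ (M *ᵥ (B *ᵥ x)) := by
      rw [← mulVec_mulVec, ← mulVec_mulVec]
    rw [hy, dotProduct_mulVec, vecMul_transpose]
    exact h2

lemma aux_trace_nonneg {n : ℕ} {M : Matrix (Fin n) (Fin n) ℝ} (h : M.PosSemidef) :
    0 ≤ M.trace := by
  rw [Matrix.trace]
  apply Finset.sum_nonneg
  intro j _
  have h2 := (posSemidef_iff_dotProduct_mulVec.mp h).2 (Pi.single j 1)
  simp only [star_trivial] at h2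
  simpa [Matrix.diag, dotProduct, mulVec, Pi.single_apply, mul_ite,
    Finset.sum_ite_eq, Finset.sum_ite_eq'] using h2

/-- The restricted estimator `B̃ = B̂₁ − G(R₁B̂₁R₂ − θ)(R₂ᵀR₂)⁻¹R₂ᵀ` satisfies the
restriction and minimizes `tr((B̂₁ − B)ᵀ Q (B̂₁ − B))` over `{B : R₁BR₂ = θ}`. -/
theorem restricted_estimator_minimizes {p q r₁ r₂ : ℕ}
    (Q : Matrix (Fin p) (Fin p) ℝ) (hQ : Q.PosDef)
    (R₁ : Matrix (Fin r₁) (Fin p) ℝ) (hR₁ : R₁.rank = r₁)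
    (R₂ : Matrix (Fin q) (Fin r₂) ℝ) (hR₂ : R₂.rank = r₂)
    (θ : Matrix (Fin r₁) (Fin r₂) ℝ)
    (Bhat₁ : Matrix (Fin p) (Fin q) ℝ)
    (G : Matrix (Fin p) (Fin r₁) ℝ) (hG : G = Q⁻¹ * R₁ᵀ * (R₁ * Q⁻¹ * R₁ᵀ)⁻¹)
    (Btilde : Matrix (Fin p) (Fin q) ℝ)
    (hBtilde : Btilde = Bhat₁ - G * (R₁ * Bhat₁ * R₂ - θ) * (R₂ᵀ * R₂)⁻¹ * R₂ᵀ) :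
    R₁ * Btilde * R₂ = θ ∧
      ∀ B : Matrix (Fin p) (Fin q) ℝ, R₁ * B * R₂ = θ →
        ((Bhat₁ - Btilde)ᵀ * Q * (Bhat₁ - Btilde)).trace ≤
          ((Bhat₁ - B)ᵀ * Q * (Bhat₁ - B)).trace := by
  classical
  -- basic invertibility facts
  have hQdet : IsUnit Q.det := isUnit_iff_ne_zero.mpr hQ.det_pos.ne'
  have hQinv : Q⁻¹.PosDef := hQ.inv
  have hQsymm : Qᵀ = Q := by
    have := hQ.isHermitian.eq
    rwa [conjTranspose_eq_transpose_of_trivial] at this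
  -- injectivity of R₁ᵀ and R₂
  have hR₁t : Function.Injective R₁ᵀ.mulVec :=
    aux_inj_of_rank R₁ᵀ (by rw [rank_transpose]; exact hR₁)
  have hR₂i : Function.Injective R₂.mulVec := aux_inj_of_rank R₂ hR₂
  -- S := R₁ Q⁻¹ R₁ᵀ is posdef, hence invertible and symmetric
  set S : Matrix (Fin r₁) (Fin r₁) ℝ := R₁ * Q⁻¹ * R₁ᵀ with hS
  have hSpd : S.PosDef := by
    have := aux_posdef_conj hQinv R₁ᵀ hR₁t
    simpa [hS, transpose_transpose] using this
  have hSdet : IsUnit S.det := isUnit_iff_ne_zero.mpr hSpd.det_pos.ne'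
  have hSsymm : Sᵀ = S := by
    have := hSpd.isHermitian.eq
    rwa [conjTranspose_eq_transpose_of_trivial] at this
  -- T := R₂ᵀ R₂ is posdef
  set T : Matrix (Fin r₂) (Fin r₂) ℝ := R₂ᵀ * R₂ with hT
  have hTpd : T.PosDef := by
    have := aux_posdef_conj (Matrix.PosDef.one (n := Fin q)) R₂ hR₂i
    simpa [hT, Matrix.mul_one] using this
  have hTdet : IsUnit T.det := isUnit_iff_ne_zero.mpr hTpd.det_pos.ne'
  have hTsymm : Tᵀ = T := by
    have := hTpd.isHermitian.eq
    rwa [conjTranspose_eq_transpose_of_trivial] at this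
  -- key products
  have hR₁G : R₁ * G = 1 := by
    rw [hG, ← Matrix.mul_assoc, ← Matrix.mul_assoc, ← hS]
    exact Matrix.mul_nonsing_inv S hSdet
  have hTinvT : T⁻¹ * T = 1 := Matrix.nonsing_inv_mul T hTdet
  -- the constraint holds for Btilde
  have hconstraint : R₁ * Btilde * R₂ = θ := by
    rw [hBtilde, Matrix.mul_sub, Matrix.sub_mul]
    have h1 : R₁ * (G * (R₁ * Bhat₁ * R₂ - θ) * T⁻¹ * R₂ᵀ) * R₂
        = R₁ * Bhat₁ * R₂ - θ := by
      calc R₁ * (G * (R₁ * Bhat₁ * R₂ - θ) * T⁻¹ * R₂ᵀ) * R₂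
          = (R₁ * G) * ((R₁ * Bhat₁ * R₂ - θ) * (T⁻¹ * (R₂ᵀ * R₂))) := by
            simp only [Matrix.mul_assoc]
        _ = R₁ * Bhat₁ * R₂ - θ := by
            rw [← hT, hTinvT, hR₁G, Matrix.mul_one, Matrix.one_mul]
    rw [h1]
    abel
  refine ⟨hconstraint, ?_⟩
  intro B hB
  set D : Matrix (Fin p) (Fin q) ℝ := Bhat₁ - Btilde with hD
  set E : Matrix (Fin p) (Fin q) ℝ := Btilde - B with hE
  have hBE : Bhat₁ - B = D + E := by rw [hD, hE]; abel
  have hRE : R₁ * E * R₂ = 0 := by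
    rw [hE, Matrix.mul_sub, Matrix.sub_mul, hconstraint, hB, sub_self]
  -- D = G Θ T⁻¹ R₂ᵀ
  have hDval : D = G * (R₁ * Bhat₁ * R₂ - θ) * T⁻¹ * R₂ᵀ := by
    rw [hD, hBtilde]; abel
  -- GᵀQ = S⁻¹ R₁
  have hGtQ : Gᵀ * Q = S⁻¹ * R₁ := by
    rw [hG]
    rw [transpose_mul, transpose_mul, transpose_nonsing_inv, hSsymm,
      transpose_transpose]
    have hQit : Q⁻¹ᵀ = Q⁻¹ := by rw [transpose_nonsing_inv, hQsymm]
    rw [Matrix.mul_assoc, Matrix.mul_assoc, hQit,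
      Matrix.nonsing_inv_mul Q hQdet, Matrix.mul_one]
  -- cross term vanishes
  have hGtQ' : ∀ (X : Matrix (Fin p) (Fin q) ℝ), Gᵀ * (Q * X) = S⁻¹ * (R₁ * X) :=
    fun X => by rw [← Matrix.mul_assoc, hGtQ, Matrix.mul_assoc]
  have hcross : (Dᵀ * Q * E).trace = 0 := by
    have hDt : Dᵀ * Q * E
        = R₂ * (T⁻¹ᵀ * ((R₁ * Bhat₁ * R₂ - θ)ᵀ * (S⁻¹ * (R₁ * E)))) := by
      rw [hDval]
      simp only [transpose_mul, transpose_transpose, Matrix.mul_assoc, hGtQ']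
    have hDt2 : R₂ * (T⁻¹ᵀ * ((R₁ * Bhat₁ * R₂ - θ)ᵀ * (S⁻¹ * (R₁ * E))))
        = R₂ * (T⁻¹ᵀ * ((R₁ * Bhat₁ * R₂ - θ)ᵀ * S⁻¹)) * (R₁ * E) := by
      simp only [Matrix.mul_assoc]
    rw [hDt, hDt2, trace_mul_comm, ← Matrix.mul_assoc, hRE, Matrix.zero_mul, trace_zero]
  have hcross' : (Eᵀ * Q * D).trace = 0 := by
    have : Eᵀ * Q * D = (Dᵀ * Q * E)ᵀ := by
      rw [transpose_mul, transpose_mul, transpose_transpose, hQsymm, Matrix.mul_assoc]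
    rw [this, trace_transpose, hcross]
  -- E'QE is psd
  have hEQE : 0 ≤ (Eᵀ * Q * E).trace := by
    apply aux_trace_nonneg
    have := hQ.posSemidef.conjTranspose_mul_mul_same E
    rwa [conjTranspose_eq_transpose_of_trivial] at this
  -- expand and conclude
  have hexp : ((Bhat₁ - B)ᵀ * Q * (Bhat₁ - B)).trace
      = (Dᵀ * Q * D).trace + (Dᵀ * Q * E).trace + (Eᵀ * Q * D).trace
        + (Eᵀ * Q * E).trace := by
    simp only [hBE, transpose_add, Matrix.add_mul, Matrix.mul_add, trace_add]
    ring
  rw [hexp, hcross, hcross']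
  simp only [add_zero, zero_add]
  exact le_add_of_nonneg_right hEQE
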